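/- For any pointed cdg-algebra (A,ε) over a ℚ-algebra R, the linearized maps LΠ_0 and LΠ_1 induced by the two evaluation maps Π_0, Π_1 : PA → A are equal on linearized homology, and both are isomorphisms LH(PA,Pε) ≅ LH(A,ε); their common inverse is induced by the inclusion LC(A,ε) = LC(A,ε) ⊗ R → LC(A,ε) ⊗ P ≅ LC(PA,Pε). -/

import Mathlib

set_option linter.unusedSectionVars false
set_option linter.unnecessarySeqFocus false
set_option maxHeartbeats 800000

/-! # Commutative differential graded algebras: basic notions -/

noncomputable section

/-- `Φ` is a quasi-isomorphism (weak equivalence) of complexes of `R`-modules: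
it induces an isomorphism on homology.  Stated elementwise: surjectivity and
injectivity on homology. -/
def IsQuasiIso (R : Type) [CommRing R] (A B : Type) [AddCommGroup A] [Module R A]
    [AddCommGroup B] [Module R B]
    (dA : A →ₗ[R] A) (dB : B →ₗ[R] B) (Φ : A → B) : Prop :=
  (∀ y : B, dB y = 0 → ∃ x : A, dA x = 0 ∧ ∃ b : B, Φ x = y + dB b) ∧
  (∀ x : A, dA x = 0 → (∃ b : B, Φ x = dB b) → ∃ a : A, x = dA a)

section Core

variable (R : Type) [CommRing R] [Algebra ℚ R]
variable (ι : Type) [CommRing ι] [DecidableEq ι] (σ : ι →+ ZMod 2)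

section GC

variable (A : Type) [Ring A] [Algebra R A]

/-- A (ℤ/2m- or ℤ-)graded, graded-commutative unital `R`-algebra structure with
grading `𝒜` and parity map `σ` (Koszul sign rule). -/
structure IsGCAlg (𝒜 : ι → Submodule R A) : Prop where
  one_mem : (1 : A) ∈ 𝒜 0
  mul_mem : ∀ ⦃i j : ι⦄ ⦃x y : A⦄, x ∈ 𝒜 i → y ∈ 𝒜 j → x * y ∈ 𝒜 (i + j)
  internal : DirectSum.IsInternal 𝒜
  gcomm : ∀ ⦃i j : ι⦄ ⦃x y : A⦄, x ∈ 𝒜 i → y ∈ 𝒜 j →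
    x * y = if σ i = 1 ∧ σ j = 1 then -(y * x) else y * x

/-- A commutative differential graded algebra: graded-commutative algebra
with an `R`-linear differential of degree `1`, squaring to zero and
satisfying the graded Leibniz rule. -/
structure IsCDGA (𝒜 : ι → Submodule R A) (d : A →ₗ[R] A) : Prop where
  toIsGCAlg : IsGCAlg R ι σ A 𝒜
  d_mem : ∀ ⦃i : ι⦄ ⦃x : A⦄, x ∈ 𝒜 i → d x ∈ 𝒜 (i + 1)
  d_sq : ∀ x : A, d (d x) = 0
  leibniz : ∀ ⦃i : ι⦄ ⦃x : A⦄, x ∈ 𝒜 i → ∀ y : A,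
    d (x * y) = d x * y + (if σ i = 1 then -(x * d y) else x * d y)

/-- An augmentation of a cdg-algebra: a unital algebra map `ε : A → R`
which is a map of dg-algebras to `R` with trivial differential and grading. -/
structure IsAug (𝒜 : ι → Submodule R A) (d : A →ₗ[R] A) (ε : A →ₐ[R] R) : Prop where
  d_van : ∀ x : A, ε (d x) = 0
  graded : ∀ ⦃i : ι⦄, i ≠ 0 → ∀ ⦃x : A⦄, x ∈ 𝒜 i → ε x = 0

/-- The augmentation ideal `A_⋆ = ker ε`. -/
def augKer (ε : A →ₐ[R] R) : Submodule R A := LinearMap.ker ε.toLinearMap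

/-- The `R`-submodule generated by products of two elements of `N`. -/
def sqSpan (N : Submodule R A) : Submodule R A :=
  Submodule.span R {a : A | ∃ x ∈ N, ∃ y ∈ N, a = x * y}

/-- `A_⋆² ⊆ A`. The linearized complex is `LC(A,ε) = A_⋆/A_⋆²`. -/
def augKerSq (ε : A →ₐ[R] R) : Submodule R A := sqSpan R A (augKer R A ε)

end GC

section Hom

variable (A B : Type) [Ring A] [Algebra R A] [Ring B] [Algebra R B]

/-- A map of cdg-algebras: an algebra map preserving the grading and
commuting with the differentials. -/
structure IsDGAHom (𝒜 : ι → Submodule R A) (dA : A →ₗ[R] A)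
    (ℬ : ι → Submodule R B) (dB : B →ₗ[R] B) (Φ : A →ₐ[R] B) : Prop where
  grade : ∀ ⦃i : ι⦄ ⦃x : A⦄, x ∈ 𝒜 i → Φ x ∈ ℬ i
  comm_d : ∀ x : A, Φ (dA x) = dB (Φ x)

/-- The linearization `LΦ : LC(A,ε) → LC(B,μ)` of `Φ` is a quasi-isomorphism,
stated elementwise in the linearized complexes `A_⋆/A_⋆²`, `B_⋆/B_⋆²`:
an `L`-cycle is an `x ∈ A_⋆` with `dx ∈ A_⋆²`. -/
def IsLQuasiIso (dA : A →ₗ[R] A) (dB : B →ₗ[R] B)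
    (ε : A →ₐ[R] R) (μ : B →ₐ[R] R) (Φ : A → B) : Prop :=
  (∀ y ∈ augKer R B μ, dB y ∈ augKerSq R B μ →
      ∃ x ∈ augKer R A ε, dA x ∈ augKerSq R A ε ∧
        ∃ b ∈ augKer R B μ, Φ x - y - dB b ∈ augKerSq R B μ) ∧
  (∀ x ∈ augKer R A ε, dA x ∈ augKerSq R A ε →
      (∃ b ∈ augKer R B μ, Φ x - dB b ∈ augKerSq R B μ) →
      ∃ a ∈ augKer R A ε, x - dA a ∈ augKerSq R A ε)

end Hom

section Sullivan

variable (A : Type) [Ring A] [Algebra R A]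

/-- A Sullivan structure on a cdg-algebra `A`: an isomorphism, as a graded
algebra, with the free graded-commutative algebra `SV` on a free graded
`R`-module `V = ⊕_{i ∈ I} M_i`, indexed by a well-ordered set `I`, with
`d M_i ⊆ S(⊕_{j<i} M_j)`.  The data is recorded by the generators `g s`
(a homogeneous basis of `V`, with index `idx s ∈ I` and degree `deg s`);
freeness is recorded by the universal property of the free
graded-commutative algebra on these generators. -/
structure SullivanStruct (𝒜 : ι → Submodule R A) (d : A →ₗ[R] A) where
  Idx : Type
  [linOrd : LinearOrder Idx]
  wf : WellFounded ((· < ·) : Idx → Idx → Prop)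
  Gen : Type
  idx : Gen → Idx
  deg : Gen → ι
  g : Gen → A
  g_mem : ∀ s, g s ∈ 𝒜 (deg s)
  free : ∀ (B : Type) [Ring B] [Algebra R B] (ℬ : ι → Submodule R B),
      IsGCAlg R ι σ B ℬ → ∀ f : Gen → B, (∀ s, f s ∈ ℬ (deg s)) →
      ∃! F : A →ₐ[R] B, (∀ ⦃i : ι⦄ ⦃x : A⦄, x ∈ 𝒜 i → F x ∈ ℬ i) ∧ ∀ s, F (g s) = f s
  filt : ∀ s, d (g s) ∈ Algebra.adjoin R (g '' {s' | idx s' < idx s})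

/-- A cdg-algebra is Sullivan if it admits a Sullivan structure. -/
def IsSullivan (𝒜 : ι → Submodule R A) (d : A →ₗ[R] A) : Prop :=
  Nonempty (SullivanStruct R ι σ A 𝒜 d)

/-- Weak equivalence of augmentations `ε ≃ μ` of a cdg-algebra `A`:
a weak equivalence of pointed cdg-algebras `(A,ε) → (A,μ)`. -/
def WeakEquivAug (𝒜 : ι → Submodule R A) (d : A →ₗ[R] A) (ε μ : A →ₐ[R] R) : Prop :=
  ∃ Φ : A →ₐ[R] A, IsDGAHom R ι A A 𝒜 d 𝒜 d Φ ∧ μ.comp Φ = ε ∧ IsQuasiIso R A A d d Φ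

end Sullivan

end Core

/-- A bundled cdg-algebra over `R` (graded by `ι` with parity `σ`). -/
structure CDGApack (R : Type) [CommRing R] [Algebra ℚ R]
    (ι : Type) [CommRing ι] [DecidableEq ι] (σ : ι →+ ZMod 2) where
  A : Type
  [ringA : Ring A]
  [algA : Algebra R A]
  gr : ι → Submodule R A
  d : A →ₗ[R] A
  isCDGA : IsCDGA R ι σ A gr d

attribute [instance] CDGApack.ringA CDGApack.algA

/-- A ℤ-graded algebra is `k`-positively generated if it is generated, as a
unital algebra, by elements of degree strictly larger than `k`. -/
def IsPosGen (R : Type) [CommRing R] (A : Type) [Ring A] [Algebra R A]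
    (𝒜 : ℤ → Submodule R A) (k : ℤ) : Prop :=
  Algebra.adjoin R (⋃ i > k, ((𝒜 i : Submodule R A) : Set A)) = ⊤

/-- The parity map `ℤ/2m → ℤ/2`. -/
def sigmaM (m : ℕ) : ZMod (2 * m) →+ ZMod 2 :=
  (ZMod.castHom (dvd_mul_right 2 m) (ZMod 2)).toAddMonoidHom

/-- The parity map `ℤ → ℤ/2`. -/
def sigmaZ : ℤ →+ ZMod 2 := (Int.castRingHom (ZMod 2)).toAddMonoidHom

end

/-! # The interval algebra and the path cdg-algebra -/

noncomputable section PathSection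

variable (R : Type) [CommRing R] [Algebra ℚ R]
variable (B : Type) [Ring B] [Algebra R B]

/-- The ambient carrier `B ⊗ P = B[s] ⊕ B[s]·ds` of the path algebra of `B`,
where `P = R[s] ⊕ R[s]·ds` is the interval algebra.  An element
`(f, g)` represents `Σ f_m ⊗ s^m + Σ g_n ⊗ s^n ds`.  The multiplication uses
the Koszul sign rule, implemented through the parity involution
`ω : B → B`, `ω(x) = (-1)^{|x|} x`. -/
def PathC (_ω : B →ₐ[R] B) : Type := Polynomial B × Polynomial B

variable (ω : B →ₐ[R] B)

namespace PathC

instance : AddCommGroup (PathC R B ω) :=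
  inferInstanceAs (AddCommGroup (Polynomial B × Polynomial B))

instance : Module R (PathC R B ω) :=
  inferInstanceAs (Module R (Polynomial B × Polynomial B))

variable {R B ω}

/-- The `B[s]` component. -/
def pp (x : PathC R B ω) : Polynomial B := Prod.fst x

/-- The `B[s]·ds` component. -/
def qq (x : PathC R B ω) : Polynomial B := Prod.snd x

/-- Build an element from the two components. -/
def mk (f g : Polynomial B) : PathC R B ω := (f, g)

@[ext] lemma ext {x y : PathC R B ω} (h1 : pp x = pp y) (h2 : qq x = qq y) : x = y :=
  Prod.ext h1 h2

@[simp] lemma pp_mk (f g : Polynomial B) : pp (mk f g : PathC R B ω) = f := rfl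
@[simp] lemma qq_mk (f g : Polynomial B) : qq (mk f g : PathC R B ω) = g := rfl
@[simp] lemma pp_add (x y : PathC R B ω) : pp (x + y) = pp x + pp y := rfl
@[simp] lemma qq_add (x y : PathC R B ω) : qq (x + y) = qq x + qq y := rfl
@[simp] lemma pp_zero : pp (0 : PathC R B ω) = 0 := rfl
@[simp] lemma qq_zero : qq (0 : PathC R B ω) = 0 := rfl
@[simp] lemma pp_neg (x : PathC R B ω) : pp (-x) = -pp x := rfl
@[simp] lemma qq_neg (x : PathC R B ω) : qq (-x) = -qq x := rfl
@[simp] lemma pp_sub (x y : PathC R B ω) : pp (x - y) = pp x - pp y := rfl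
@[simp] lemma qq_sub (x y : PathC R B ω) : qq (x - y) = qq x - qq y := rfl
@[simp] lemma pp_smul (r : R) (x : PathC R B ω) : pp (r • x) = r • pp x := rfl
@[simp] lemma qq_smul (r : R) (x : PathC R B ω) : qq (r • x) = r • qq x := rfl

variable (R B ω)

instance : One (PathC R B ω) := ⟨mk 1 0⟩

instance : Mul (PathC R B ω) :=
  ⟨fun x y => mk (pp x * pp y) (pp x * qq y + qq x * (pp y).map ω.toRingHom)⟩

variable {R B ω}

@[simp] lemma pp_one : pp (1 : PathC R B ω) = 1 := rfl
@[simp] lemma qq_one : qq (1 : PathC R B ω) = 0 := rfl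
@[simp] lemma pp_mul (x y : PathC R B ω) : pp (x * y) = pp x * pp y := rfl
@[simp] lemma qq_mul (x y : PathC R B ω) :
    qq (x * y) = pp x * qq y + qq x * (pp y).map ω.toRingHom := rfl

lemma pmap_smul (r : R) (p : Polynomial B) :
    (r • p).map ω.toRingHom = r • p.map ω.toRingHom := by
  ext n
  simp [Polynomial.coeff_map, Polynomial.coeff_smul, map_smul]

variable (R B ω)

instance instRing : Ring (PathC R B ω) :=
  { (inferInstanceAs (AddCommGroup (PathC R B ω)) : AddCommGroup (PathC R B ω)),
    (inferInstanceAs (One (PathC R B ω)) : One (PathC R B ω)),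
    (inferInstanceAs (Mul (PathC R B ω)) : Mul (PathC R B ω)) with
    mul_assoc := by
      intro a b c
      apply ext <;>
        simp [mul_assoc, mul_add, add_mul, Polynomial.map_mul] <;> abel
    one_mul := by intro a; apply ext <;> simp
    mul_one := by intro a; apply ext <;> simp
    left_distrib := by
      intro a b c
      apply ext <;> simp [mul_add, add_mul, Polynomial.map_add] <;> abel
    right_distrib := by
      intro a b c
      apply ext <;> simp [mul_add, add_mul, Polynomial.map_add] <;> abel
    zero_mul := by intro a; apply ext <;> simp
    mul_zero := by intro a; apply ext <;> simp }

instance : Algebra R (PathC R B ω) :=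
  Algebra.ofModule
    (by
      intro r x y
      apply ext <;> simp [smul_mul_assoc])
    (by
      intro r x y
      apply ext
      · simp [mul_smul_comm]
      · show pp x * (r • qq y) + qq x * ((r • pp y).map ω.toRingHom) =
          r • (pp x * qq y + qq x * (pp y).map ω.toRingHom)
        rw [pmap_smul, smul_add, mul_smul_comm, mul_smul_comm] )

end PathC

end PathSection

noncomputable section PathSection2

namespace PathC

variable (R : Type) [CommRing R] [Algebra ℚ R]
variable (ι : Type) [CommRing ι] [DecidableEq ι]
variable (B : Type) [Ring B] [Algebra R B] (ω : B →ₐ[R] B)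

/-- Applying a linear map to each coefficient of a polynomial. -/
def coeffMap (f : B →ₗ[R] B) : Polynomial B →ₗ[R] Polynomial B where
  toFun p := ⟨⟨p.toFinsupp.coeff.mapRange f f.map_zero⟩⟩
  map_add' p q := by
    rcases p with ⟨p⟩; rcases q with ⟨q⟩
    simp only [← Polynomial.ofFinsupp_add]
    congr 2
    exact Finsupp.mapRange_add (fun a b => f.map_add a b) p.coeff q.coeff
  map_smul' r p := by
    rcases p with ⟨p⟩
    simp only [← Polynomial.ofFinsupp_smul]
    congr 2
    exact Finsupp.mapRange_smul r p.coeff (fun a => f.map_smul r a)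

@[simp] lemma coeff_coeffMap (f : B →ₗ[R] B) (p : Polynomial B) (n : ℕ) :
    (coeffMap R B f p).coeff n = f (p.coeff n) := by
  rcases p with ⟨p⟩
  rfl

/-- The differential of the path algebra `PB ⊆ B ⊗ P`:
`d(x ⊗ sᵐ) = dx ⊗ sᵐ + (-1)^{|x|} m · x ⊗ s^{m-1} ds` and
`d(y ⊗ sⁿ ds) = dy ⊗ sⁿ ds`, the sign being implemented by `ω`. -/
def pathD (dB : B →ₗ[R] B) : PathC R B ω →ₗ[R] PathC R B ω where
  toFun x := mk (coeffMap R B dB (pp x))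
    (coeffMap R B dB (qq x) + Polynomial.derivative ((pp x).map ω.toRingHom))
  map_add' x y := by
    apply ext <;> simp [Polynomial.map_add] <;> abel
  map_smul' r x := by
    apply ext
    · ext n
      simp [Polynomial.coeff_smul, map_smul]
    · ext n
      simp [Polynomial.coeff_smul, Polynomial.coeff_derivative, Polynomial.coeff_map,
        map_smul, smul_mul_assoc, smul_add]

/-- The grading of the path algebra: `s` has degree `0` and `ds` degree `1`, so
`deg (x ⊗ sᵐ) = |x|` and `deg (y ⊗ sⁿ ds) = |y| + 1`. -/
def pathGr (ℬ : ι → Submodule R B) (i : ι) : Submodule R (PathC R B ω) where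
  carrier := {x | (∀ n, (pp x).coeff n ∈ ℬ i) ∧ ∀ n, (qq x).coeff n ∈ ℬ (i - 1)}
  add_mem' := by
    rintro x y ⟨hx1, hx2⟩ ⟨hy1, hy2⟩
    constructor
    · intro n; rw [pp_add, Polynomial.coeff_add]; exact add_mem (hx1 n) (hy1 n)
    · intro n; rw [qq_add, Polynomial.coeff_add]; exact add_mem (hx2 n) (hy2 n)
  zero_mem' := by
    constructor <;> intro n <;> simp
  smul_mem' := by
    rintro r x ⟨hx1, hx2⟩
    constructor
    · intro n; rw [pp_smul, Polynomial.coeff_smul]; exact Submodule.smul_mem _ _ (hx1 n)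
    · intro n; rw [qq_smul, Polynomial.coeff_smul]; exact Submodule.smul_mem _ _ (hx2 n)

/-- The augmentation `Pμ : PB → R`, projection to the `R`-summand. -/
def pathAug (μ : B →ₐ[R] R) : PathC R B ω →ₐ[R] R where
  toFun x := μ ((pp x).coeff 0)
  map_one' := by simp
  map_mul' x y := by simp
  map_zero' := by simp
  map_add' x y := by simp
  commutes' r := by
    show μ ((pp (r • (1 : PathC R B ω))).coeff 0) = _
    rw [pp_smul, pp_one, Polynomial.coeff_smul, Polynomial.coeff_one_zero]
    simp [Algebra.algebraMap_eq_smul_one]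

/-- Evaluation `Π₀ : PB → B` at `s = 0`, `ds = 0`. -/
def pathPi0 : PathC R B ω →ₐ[R] B where
  toFun x := (pp x).coeff 0
  map_one' := by simp
  map_mul' x y := by simp
  map_zero' := by simp
  map_add' x y := by simp
  commutes' r := by
    show (pp (r • (1 : PathC R B ω))).coeff 0 = _
    rw [pp_smul, pp_one, Polynomial.coeff_smul, Polynomial.coeff_one_zero]
    simp [Algebra.algebraMap_eq_smul_one]

/-- The sum of the coefficients of a polynomial, as a ring homomorphism
(evaluation at the central element `1`). -/
def evalOneHom : Polynomial B →+* B :=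
  Polynomial.eval₂RingHom' (RingHom.id B) 1 (fun a => Commute.one_right a)

/-- Evaluation `Π₁ : PB → B` at `s = 1`, `ds = 0`. -/
def pathPi1 : PathC R B ω →ₐ[R] B where
  toFun x := evalOneHom B (pp x)
  map_one' := by simp
  map_mul' x y := by simp
  map_zero' := by simp
  map_add' x y := by simp
  commutes' r := by
    have h1 : pp ((algebraMap R (PathC R B ω)) r) = Polynomial.C (algebraMap R B r) := by
      show r • (1 : Polynomial B) = _
      rw [← Algebra.algebraMap_eq_smul_one, Polynomial.algebraMap_apply]
    rw [show (algebraMap R (PathC R B ω)) r = r • 1 from rfl] at h1 ⊢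
    show evalOneHom B (pp ((r • 1 : PathC R B ω))) = _
    rw [h1]
    simp [evalOneHom]

/-- The inclusion `B → B ⊗ P`, `x ↦ x ⊗ 1`. -/
def pathInc : B →ₐ[R] PathC R B ω where
  toFun x := mk (Polynomial.C x) 0
  map_one' := by apply ext <;> simp
  map_mul' x y := by apply ext <;> simp
  map_zero' := by apply ext <;> simp
  map_add' x y := by apply ext <;> simp
  commutes' r := by
    apply ext
    · show Polynomial.C (algebraMap R B r) = r • (1 : Polynomial B)
      rw [← Polynomial.algebraMap_apply, Algebra.algebraMap_eq_smul_one]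
    · show (0 : Polynomial B) = r • (0 : Polynomial B)
      simp

/-- Membership in the path algebra `PB = R ⊕ (B_⋆ ⊗ P) ⊆ B ⊗ P` of a pointed
cdg-algebra `(B, μ)`. -/
def memPB (μ : B →ₐ[R] R) (x : PathC R B ω) : Prop :=
  (∀ n, n ≠ 0 → (pp x).coeff n ∈ augKer R B μ) ∧ ∀ n, (qq x).coeff n ∈ augKer R B μ

/-- The augmentation ideal `(PB)_⋆ = ker Pμ ⊆ PB = R ⊕ (B_⋆ ⊗ P)`, realized as a
submodule of the ambient algebra `B ⊗ P`: all coefficients lie in `B_⋆ = ker μ`. -/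
def pathAugKer (μ : B →ₐ[R] R) : Submodule R (PathC R B ω) where
  carrier := {x | (∀ n, (pp x).coeff n ∈ augKer R B μ) ∧ ∀ n, (qq x).coeff n ∈ augKer R B μ}
  add_mem' := by
    rintro x y ⟨hx1, hx2⟩ ⟨hy1, hy2⟩
    constructor
    · intro n; rw [pp_add, Polynomial.coeff_add]; exact add_mem (hx1 n) (hy1 n)
    · intro n; rw [qq_add, Polynomial.coeff_add]; exact add_mem (hx2 n) (hy2 n)
  zero_mem' := by
    constructor <;> intro n <;> simp
  smul_mem' := by
    rintro r x ⟨hx1, hx2⟩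
    constructor
    · intro n; rw [pp_smul, Polynomial.coeff_smul]; exact Submodule.smul_mem _ _ (hx1 n)
    · intro n; rw [qq_smul, Polynomial.coeff_smul]; exact Submodule.smul_mem _ _ (hx2 n)

/-- `(PB)_⋆²`, realized in the ambient algebra `B ⊗ P`. -/
def pathAugKerSq (μ : B →ₐ[R] R) : Submodule R (PathC R B ω) :=
  sqSpan R (PathC R B ω) (pathAugKer R B ω μ)

end PathC

/-- `ω` is the parity involution of the graded algebra `(B, ℬ)`:
`ω x = (-1)^{|x|} x` on homogeneous elements. -/
def IsParityOp {R : Type} [CommRing R] [Algebra ℚ R] (ι : Type) [CommRing ι]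
    [DecidableEq ι] (σ : ι →+ ZMod 2) (B : Type) [Ring B] [Algebra R B]
    (ℬ : ι → Submodule R B) (ω : B →ₐ[R] B) : Prop :=
  ∀ ⦃i : ι⦄ ⦃x : B⦄, x ∈ ℬ i → ω x = if σ i = 1 then -x else x

/-- A cdga-homotopy `H : Φ ≃ Ψ` between pointed cdg-algebra maps
`Φ, Ψ : (A, ε) → (B, μ)`: a pointed map of cdg-algebras `H : A → PB` to the
path cdg-algebra `PB = R ⊕ (B_⋆ ⊗ P)` of `(B, μ)` with `Π₀ ∘ H = Φ` and
`Π₁ ∘ H = Ψ`. -/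
structure IsHomotopy {R : Type} [CommRing R] [Algebra ℚ R] (ι : Type) [CommRing ι]
    [DecidableEq ι] (A : Type) [Ring A] [Algebra R A] (B : Type) [Ring B] [Algebra R B]
    (𝒜 : ι → Submodule R A) (dA : A →ₗ[R] A) (ε : A →ₐ[R] R)
    (ℬ : ι → Submodule R B) (dB : B →ₗ[R] B) (μ : B →ₐ[R] R) (ω : B →ₐ[R] B)
    (Φ Ψ : A →ₐ[R] B) (H : A →ₐ[R] PathC R B ω) : Prop where
  grade : ∀ ⦃i : ι⦄ ⦃x : A⦄, x ∈ 𝒜 i → H x ∈ PathC.pathGr R ι B ω ℬ i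
  comm_d : ∀ x : A, H (dA x) = PathC.pathD R B ω dB (H x)
  pointed : ∀ x : A, PathC.pathAug R B ω μ (H x) = ε x
  mem : ∀ x : A, PathC.memPB R B ω μ (H x)
  pi0 : ∀ x : A, PathC.pathPi0 R B ω (H x) = Φ x
  pi1 : ∀ x : A, PathC.pathPi1 R B ω (H x) = Ψ x

end PathSection2

/-! For an `L`-cycle `x = p(s) + q(s) ds` of `PA`, the `ds`-component of `dx` lies in `A_⋆²`,
i.e. `(n + 1) p_{n+1} ≡ ± d q_n` modulo `A_⋆²`. Hence `b = ± ∫ q ds` (rational coefficients, the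
sign coming from the parity operator) satisfies `x - ι(Π₀ x) ≡ d b`. Since `Π₀`, `Π₁` and `ι` are
chain maps preserving the augmentation ideals and their squares, applying `Π₀ - Π₁` gives
`Π₀ x ≡ Π₁ x`, and adding the image of that relation under `ι` gives `x ≡ ι(Π₁ x)`. -/

open PathC Polynomial

section SqSpan

variable {R : Type} [CommRing R] {A B : Type} [Ring A] [Algebra R A] [Ring B] [Algebra R B]

lemma mul_mem_sqSpan {N : Submodule R A} {x y : A} (hx : x ∈ N) (hy : y ∈ N) :
    x * y ∈ sqSpan R A N :=
  Submodule.subset_span ⟨x, hx, y, hy, rfl⟩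

lemma sqSpan_le {N P : Submodule R A} (h : ∀ x ∈ N, ∀ y ∈ N, x * y ∈ P) : sqSpan R A N ≤ P :=
  Submodule.span_le.mpr <| by rintro _ ⟨x, hx, y, hy, rfl⟩; exact h x hx y hy

lemma sqSpan_le_comap {N : Submodule R A} {N' : Submodule R B} (f : A →ₐ[R] B)
    (h : N ≤ N'.comap f.toLinearMap) : sqSpan R A N ≤ (sqSpan R B N').comap f.toLinearMap :=
  sqSpan_le fun x hx y hy => by
    simpa using mul_mem_sqSpan (Submodule.mem_comap.mp (h hx)) (Submodule.mem_comap.mp (h hy))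

lemma augKer_le_comap {ε : A →ₐ[R] R} {μ : B →ₐ[R] R} (f : A →ₐ[R] B) (h : ∀ x, μ (f x) = ε x) :
    augKer R A ε ≤ (augKer R B μ).comap f.toLinearMap :=
  fun x hx => by simp_all [augKer]

lemma coeff_mul_mem_sqSpan {N : Submodule R A} {p q : A[X]} (hp : ∀ n, p.coeff n ∈ N)
    (hq : ∀ n, q.coeff n ∈ N) (n : ℕ) : (p * q).coeff n ∈ sqSpan R A N := by
  rw [coeff_mul]
  exact Submodule.sum_mem _ fun k _ => mul_mem_sqSpan (hp k.1) (hq k.2)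

end SqSpan

section Polynomial

variable {R : Type} [CommRing R] {B : Type} [Ring B] [Algebra R B]

lemma eval_one_mem {M : Submodule R B} {p : B[X]} (hp : ∀ n, p.coeff n ∈ M) : p.eval 1 ∈ M := by
  rw [eval_eq_sum, sum_def]
  exact Submodule.sum_mem _ fun n _ => by simpa using hp n

variable [Algebra ℚ R]

lemma algebraMap_inv_smul_mul_succ (n : ℕ) (y : B) :
    algebraMap ℚ R ((n : ℚ) + 1)⁻¹ • (y * ((n : B) + 1)) = y := by
  have hy : y * ((n : B) + 1) = algebraMap ℚ R ((n : ℚ) + 1) • y := by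
    simp [mul_add, add_smul, Nat.cast_smul_eq_nsmul, nsmul_eq_mul, Nat.cast_comm]
  rw [hy, smul_smul, ← map_mul, inv_mul_cancel₀ (by positivity), map_one, one_smul]

variable (R) in
noncomputable def antiderivative (p : B[X]) : B[X] :=
  p.sum fun n a => monomial (n + 1) (algebraMap ℚ R ((n : ℚ) + 1)⁻¹ • a)

@[simp] lemma coeff_antiderivative_zero (p : B[X]) : (antiderivative R p).coeff 0 = 0 := by
  simp [antiderivative, sum_def, finsetSum_coeff, coeff_monomial]

@[simp] lemma coeff_antiderivative_succ (p : B[X]) (n : ℕ) :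
    (antiderivative R p).coeff (n + 1) = algebraMap ℚ R ((n : ℚ) + 1)⁻¹ • p.coeff n := by
  simp only [antiderivative, sum_def, finsetSum_coeff, coeff_monomial, add_left_inj]
  rw [Finset.sum_ite_eq']
  split_ifs with h
  · rfl
  · simp [notMem_support_iff.mp h]

lemma derivative_antiderivative (p : B[X]) : derivative (antiderivative R p) = p := by
  ext n
  rw [coeff_derivative, coeff_antiderivative_succ, smul_mul_assoc, algebraMap_inv_smul_mul_succ]

lemma coeff_antiderivative_mem {M : Submodule R B} {p : B[X]} (hp : ∀ n, p.coeff n ∈ M) :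
    ∀ n, (antiderivative R p).coeff n ∈ M
  | 0 => by simp
  | n + 1 => by simpa using M.smul_mem _ (hp n)

end Polynomial

section Parity

variable {R : Type} [CommRing R] [Algebra ℚ R] {ι : Type} [CommRing ι] [DecidableEq ι]
  {σ : ι →+ ZMod 2} {A : Type} [Ring A] [Algebra R A] {𝒜 : ι → Submodule R A}
  {d : A →ₗ[R] A} {ε : A →ₐ[R] R} {ω : A →ₐ[R] A}

@[elab_as_elim]
lemma IsGCAlg.induction_on (h𝒜 : IsGCAlg R ι σ A 𝒜) {P : A → Prop} (x : A) (zero : P 0)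
    (add : ∀ x y, P x → P y → P (x + y)) (homogeneous : ∀ i, ∀ x ∈ 𝒜 i, P x) : P x :=
  Submodule.iSup_induction (motive := P) 𝒜 (h𝒜.internal.submodule_iSup_eq_top ▸ Submodule.mem_top)
    homogeneous zero add

lemma IsParityOp.apply_apply (hω : IsParityOp ι σ A 𝒜 ω) (h𝒜 : IsGCAlg R ι σ A 𝒜) (x : A) :
    ω (ω x) = x := by
  refine h𝒜.induction_on x (by simp) (fun x y hx hy => by simp [hx, hy]) fun i x hx => ?_
  by_cases h : σ i = 1 <;> simp [hω hx, h]

lemma IsParityOp.aug_apply (hω : IsParityOp ι σ A 𝒜 ω) (h𝒜 : IsGCAlg R ι σ A 𝒜)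
    (hε : IsAug R ι A 𝒜 d ε) (x : A) : ε (ω x) = ε x := by
  refine h𝒜.induction_on x (by simp) (fun x y hx hy => by simp [hx, hy]) fun i x hx => ?_
  by_cases h : σ i = 1
  · have hi : i ≠ 0 := by rintro rfl; simp at h
    simp [hω hx, h, hε.graded hi hx]
  · simp [hω hx, h]

lemma IsParityOp.apply_d (hω : IsParityOp ι σ A 𝒜 ω) (hA : IsCDGA R ι σ A 𝒜 d) (hσ : σ 1 = 1)
    (x : A) : ω (d x) = -d (ω x) := by
  refine hA.toIsGCAlg.induction_on x (by simp) (fun x y hx hy => by simp [hx, hy, add_comm])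
    fun i x hx => ?_
  have hparity : ∀ a : ZMod 2, a + 1 = 1 ↔ a ≠ 1 := by decide
  by_cases h : σ i = 1 <;> simp [hω hx, hω (hA.d_mem hx), hσ, hparity, h]

lemma sigmaM_one (m : ℕ) : sigmaM m 1 = 1 :=
  map_one (ZMod.castHom (dvd_mul_right 2 m) (ZMod 2))

end Parity

namespace PathC

variable {R : Type} [CommRing R] [Algebra ℚ R] {B : Type} [Ring B] [Algebra R B]
  {ω : B →ₐ[R] B} {dB : B →ₗ[R] B} {μ : B →ₐ[R] R}

@[simp] lemma pp_pathD (x : PathC R B ω) : pp (pathD R B ω dB x) = coeffMap R B dB (pp x) := rfl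

@[simp] lemma qq_pathD (x : PathC R B ω) :
    qq (pathD R B ω dB x) = coeffMap R B dB (qq x) + derivative ((pp x).map ω.toRingHom) := rfl

lemma pathPi0_apply (x : PathC R B ω) : pathPi0 R B ω x = (pp x).coeff 0 := rfl

lemma pathPi1_apply (x : PathC R B ω) : pathPi1 R B ω x = (pp x).eval 1 := rfl

lemma pathInc_apply (a : B) : pathInc R B ω a = mk (C a) 0 := rfl

@[simp] lemma coeffMap_monomial (f : B →ₗ[R] B) (n : ℕ) (a : B) :
    coeffMap R B f (monomial n a) = monomial n (f a) := by
  ext k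
  simp only [coeff_coeffMap, coeff_monomial]
  split_ifs <;> simp

lemma eval_one_coeffMap (f : B →ₗ[R] B) (p : B[X]) :
    (coeffMap R B f p).eval 1 = f (p.eval 1) := by
  induction p using Polynomial.induction_on' with
  | add p q hp hq => simp [hp, hq]
  | monomial n a => simp

lemma pathPi0_pathInc (a : B) : pathPi0 R B ω (pathInc R B ω a) = a := by
  simp [pathPi0_apply, pathInc_apply]

lemma pathPi1_pathInc (a : B) : pathPi1 R B ω (pathInc R B ω a) = a := by
  simp [pathPi1_apply, pathInc_apply]

lemma pathD_pathInc (a : B) : pathD R B ω dB (pathInc R B ω a) = pathInc R B ω (dB a) := by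
  apply PathC.ext <;> simp [pathInc_apply, ← monomial_zero_left, derivative_monomial]

lemma pathPi0_pathD (x : PathC R B ω) :
    pathPi0 R B ω (pathD R B ω dB x) = dB (pathPi0 R B ω x) := by
  simp [pathPi0_apply]

lemma pathPi1_pathD (x : PathC R B ω) :
    pathPi1 R B ω (pathD R B ω dB x) = dB (pathPi1 R B ω x) :=
  eval_one_coeffMap dB (pp x)

lemma mk_monomial_mem_pathAugKer (n : ℕ) {a : B} (ha : a ∈ augKer R B μ) :
    (mk (monomial n a) 0 : PathC R B ω) ∈ pathAugKer R B ω μ := by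
  refine ⟨fun k => ?_, fun k => by simp [zero_mem]⟩
  rw [pp_mk, coeff_monomial]
  split_ifs
  exacts [ha, zero_mem _]

lemma pathInc_mem_pathAugKer {a : B} (ha : a ∈ augKer R B μ) :
    pathInc R B ω a ∈ pathAugKer R B ω μ := by
  simpa [pathInc_apply] using mk_monomial_mem_pathAugKer (ω := ω) 0 ha

lemma pathPi0_mem_augKer {x : PathC R B ω} (hx : x ∈ pathAugKer R B ω μ) :
    pathPi0 R B ω x ∈ augKer R B μ :=
  hx.1 0

lemma pathPi1_mem_augKer {x : PathC R B ω} (hx : x ∈ pathAugKer R B ω μ) :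
    pathPi1 R B ω x ∈ augKer R B μ :=
  eval_one_mem hx.1

lemma pathInc_mem_pathAugKerSq {a : B} (ha : a ∈ augKerSq R B μ) :
    pathInc R B ω a ∈ pathAugKerSq R B ω μ :=
  sqSpan_le_comap (pathInc R B ω) (fun _ => pathInc_mem_pathAugKer) ha

lemma pathPi0_mem_augKerSq {x : PathC R B ω} (hx : x ∈ pathAugKerSq R B ω μ) :
    pathPi0 R B ω x ∈ augKerSq R B μ :=
  sqSpan_le_comap (pathPi0 R B ω) (fun _ => pathPi0_mem_augKer) hx

lemma pathPi1_mem_augKerSq {x : PathC R B ω} (hx : x ∈ pathAugKerSq R B ω μ) :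
    pathPi1 R B ω x ∈ augKerSq R B μ :=
  sqSpan_le_comap (pathPi1 R B ω) (fun _ => pathPi1_mem_augKer) hx

lemma mk_monomial_mem_pathAugKerSq (n : ℕ) {a : B} (ha : a ∈ augKerSq R B μ) :
    (mk (monomial n a) 0 : PathC R B ω) ∈ pathAugKerSq R B ω μ := by
  let s : PathC R B ω := mk (monomial n 1) 0
  have hs : ∀ b, s * pathInc R B ω b = mk (monomial n b) 0 := fun b => by
    apply PathC.ext <;> simp [s, pathInc_apply]
  have hle : augKerSq R B μ ≤
      (pathAugKerSq R B ω μ).comap (LinearMap.mulLeft R s ∘ₗ (pathInc R B ω).toLinearMap) :=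
    sqSpan_le fun x hx y hy => by
      simpa [pathAugKerSq, ← mul_assoc, hs] using
        mul_mem_sqSpan (mk_monomial_mem_pathAugKer n hx) (pathInc_mem_pathAugKer hy)
  simpa [hs] using hle ha

lemma mk_mem_pathAugKerSq {f : B[X]} (hf : ∀ n, f.coeff n ∈ augKerSq R B μ) :
    (mk f 0 : PathC R B ω) ∈ pathAugKerSq R B ω μ := by
  have hsum : (mk f 0 : PathC R B ω) = ∑ n ∈ f.support, mk (monomial n (f.coeff n)) 0 := by
    conv_lhs => rw [f.as_sum_support]
    exact map_sum (LinearMap.inl R B[X] B[X] : B[X] →ₗ[R] PathC R B ω) _ _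
  rw [hsum]
  exact Submodule.sum_mem _ fun n _ => mk_monomial_mem_pathAugKerSq n (hf n)

lemma coeff_qq_mem_augKerSq (hμω : ∀ b, μ (ω b) = μ b) {z : PathC R B ω}
    (hz : z ∈ pathAugKerSq R B ω μ) (n : ℕ) : (qq z).coeff n ∈ augKerSq R B μ := by
  induction hz using Submodule.span_induction generalizing n with
  | mem z hz =>
    obtain ⟨u, hu, v, hv, rfl⟩ := hz
    have hωv : ∀ k, ((pp v).map ω.toRingHom).coeff k ∈ augKer R B μ := fun k => by
      simpa [coeff_map] using augKer_le_comap ω hμω (hv.1 k)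
    rw [qq_mul, coeff_add]
    exact add_mem (coeff_mul_mem_sqSpan hu.1 hv.2 n) (coeff_mul_mem_sqSpan hu.2 hωv n)
  | zero => simp
  | add x y _ _ hx hy => simpa using add_mem (hx n) (hy n)
  | smul r x _ hx => simpa using Submodule.smul_mem _ r (hx n)

lemma coeff_succ_sub_mem_augKerSq (hωω : ∀ b, ω (ω b) = b) (hωd : ∀ b, ω (dB b) = -dB (ω b))
    (hμω : ∀ b, μ (ω b) = μ b) {x : PathC R B ω} (hdx : pathD R B ω dB x ∈ pathAugKerSq R B ω μ)
    (n : ℕ) :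
    (pp x).coeff (n + 1) - dB (ω ((antiderivative R (qq x)).coeff (n + 1))) ∈ augKerSq R B μ := by
  have hdω : ∀ b, dB (ω b) = -ω (dB b) := fun b => by rw [hωd, neg_neg]
  have heq : (pp x).coeff (n + 1) - dB (ω ((antiderivative R (qq x)).coeff (n + 1))) =
      algebraMap ℚ R ((n : ℚ) + 1)⁻¹ • ω ((qq (pathD R B ω dB x)).coeff n) := by
    simp [coeff_derivative, coeff_map, hωω, hdω, smul_add, algebraMap_inv_smul_mul_succ, add_comm]
  rw [heq]
  exact Submodule.smul_mem _ _
    (sqSpan_le_comap ω (augKer_le_comap ω hμω) (coeff_qq_mem_augKerSq hμω hdx n))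

theorem exists_homologous_pathInc_pathPi0 (hωω : ∀ b, ω (ω b) = b)
    (hωd : ∀ b, ω (dB b) = -dB (ω b)) (hμω : ∀ b, μ (ω b) = μ b) {x : PathC R B ω}
    (hx : x ∈ pathAugKer R B ω μ) (hdx : pathD R B ω dB x ∈ pathAugKerSq R B ω μ) :
    ∃ b ∈ pathAugKer R B ω μ,
      x - pathInc R B ω (pathPi0 R B ω x) - pathD R B ω dB b ∈ pathAugKerSq R B ω μ := by
  set J := antiderivative R (qq x)
  have hJJ : (J.map (ω : B →+* B)).map (ω : B →+* B) = J := by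
    rw [Polynomial.map_map, show (ω : B →+* B).comp ω = RingHom.id B from RingHom.ext hωω,
      Polynomial.map_id]
  refine ⟨mk (J.map (ω : B →+* B)) 0, ⟨fun n => ?_, fun n => by simp [zero_mem]⟩, ?_⟩
  · simpa [coeff_map] using augKer_le_comap ω hμω (coeff_antiderivative_mem hx.2 n)
  have hres : x - pathInc R B ω (pathPi0 R B ω x) - pathD R B ω dB (mk (J.map (ω : B →+* B)) 0) =
      mk (pp x - C ((pp x).coeff 0) - coeffMap R B dB (J.map (ω : B →+* B))) 0 := by
    apply PathC.ext
    · simp [pathInc_apply, pathPi0_apply]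
    · simp [pathInc_apply, hJJ, J, derivative_antiderivative]
  rw [hres]
  refine mk_mem_pathAugKerSq fun n => ?_
  cases n with
  | zero => simp [J]
  | succ n => simpa [coeff_map, J] using coeff_succ_sub_mem_augKerSq hωω hωd hμω hdx n

theorem exists_homologous_pathPi0_pathPi1 (hωω : ∀ b, ω (ω b) = b)
    (hωd : ∀ b, ω (dB b) = -dB (ω b)) (hμω : ∀ b, μ (ω b) = μ b) {x : PathC R B ω}
    (hx : x ∈ pathAugKer R B ω μ) (hdx : pathD R B ω dB x ∈ pathAugKerSq R B ω μ) :
    ∃ c ∈ augKer R B μ, pathPi0 R B ω x - pathPi1 R B ω x - dB c ∈ augKerSq R B μ := by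
  obtain ⟨b, hb, hres⟩ := exists_homologous_pathInc_pathPi0 hωω hωd hμω hx hdx
  refine ⟨pathPi0 R B ω b - pathPi1 R B ω b,
    sub_mem (pathPi0_mem_augKer hb) (pathPi1_mem_augKer hb), ?_⟩
  convert sub_mem (pathPi0_mem_augKerSq hres) (pathPi1_mem_augKerSq hres) using 1
  simp only [map_sub, pathPi0_pathInc, pathPi1_pathInc, pathPi0_pathD, pathPi1_pathD]
  abel

theorem exists_homologous_pathInc_pathPi1 (hωω : ∀ b, ω (ω b) = b)
    (hωd : ∀ b, ω (dB b) = -dB (ω b)) (hμω : ∀ b, μ (ω b) = μ b) {x : PathC R B ω}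
    (hx : x ∈ pathAugKer R B ω μ) (hdx : pathD R B ω dB x ∈ pathAugKerSq R B ω μ) :
    ∃ b ∈ pathAugKer R B ω μ,
      x - pathInc R B ω (pathPi1 R B ω x) - pathD R B ω dB b ∈ pathAugKerSq R B ω μ := by
  obtain ⟨b, hb, hres⟩ := exists_homologous_pathInc_pathPi0 hωω hωd hμω hx hdx
  obtain ⟨c, hc, hc'⟩ := exists_homologous_pathPi0_pathPi1 hωω hωd hμω hx hdx
  refine ⟨b + pathInc R B ω c, add_mem hb (pathInc_mem_pathAugKer hc), ?_⟩
  convert add_mem hres (pathInc_mem_pathAugKerSq (ω := ω) hc') using 1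
  simp only [map_add, map_sub, pathD_pathInc]
  abel

end PathC

theorem path_object_linearized_homology
    (R : Type) [CommRing R] [Algebra ℚ R] (m : ℕ)
    (A : Type) [Ring A] [Algebra R A]
    (𝒜 : ZMod (2*m) → Submodule R A) (dA : A →ₗ[R] A)
    (hA : IsCDGA R (ZMod (2*m)) (sigmaM m) A 𝒜 dA)
    (ε : A →ₐ[R] R) (hε : IsAug R (ZMod (2*m)) A 𝒜 dA ε)
    (ω : A →ₐ[R] A) (hω : IsParityOp (ZMod (2*m)) (sigmaM m) A 𝒜 ω) :
    -- the inclusion maps `LC(A,ε)` into `LC(PA,Pε)`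
    (∀ y ∈ augKer R A ε, PathC.pathInc R A ω y ∈ PathC.pathAugKer R A ω ε) ∧
    -- `LΠ₀ = LΠ₁` on linearized homology
    (∀ x : PathC R A ω, x ∈ PathC.pathAugKer R A ω ε →
        PathC.pathD R A ω dA x ∈ PathC.pathAugKerSq R A ω ε →
        ∃ b ∈ augKer R A ε,
          PathC.pathPi0 R A ω x - PathC.pathPi1 R A ω x - dA b ∈ augKerSq R A ε) ∧
    -- `Lι ∘ LΠ₀ = id` and `Lι ∘ LΠ₁ = id` on the linearized homology of `PA`
    (∀ x : PathC R A ω, x ∈ PathC.pathAugKer R A ω ε →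
        PathC.pathD R A ω dA x ∈ PathC.pathAugKerSq R A ω ε →
        ∃ b ∈ PathC.pathAugKer R A ω ε,
          x - PathC.pathInc R A ω (PathC.pathPi0 R A ω x) - PathC.pathD R A ω dA b
            ∈ PathC.pathAugKerSq R A ω ε) ∧
    (∀ x : PathC R A ω, x ∈ PathC.pathAugKer R A ω ε →
        PathC.pathD R A ω dA x ∈ PathC.pathAugKerSq R A ω ε →
        ∃ b ∈ PathC.pathAugKer R A ω ε,
          x - PathC.pathInc R A ω (PathC.pathPi1 R A ω x) - PathC.pathD R A ω dA b
            ∈ PathC.pathAugKerSq R A ω ε) ∧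
    -- `LΠ₀ ∘ Lι = id = LΠ₁ ∘ Lι` (already at the chain level)
    (∀ y : A, PathC.pathPi0 R A ω (PathC.pathInc R A ω y) = y ∧
        PathC.pathPi1 R A ω (PathC.pathInc R A ω y) = y) := by
  have hωω := hω.apply_apply hA.toIsGCAlg
  have hωd := hω.apply_d hA (sigmaM_one m)
  have hεω := hω.aug_apply hA.toIsGCAlg hε
  exact ⟨fun _ => pathInc_mem_pathAugKer,
    fun _ hx hdx => exists_homologous_pathPi0_pathPi1 hωω hωd hεω hx hdx,
    fun _ hx hdx => exists_homologous_pathInc_pathPi0 hωω hωd hεω hx hdx,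
    fun _ hx hdx => exists_homologous_pathInc_pathPi1 hωω hωd hεω hx hdx,
    fun y => ⟨pathPi0_pathInc y, pathPi1_pathInc y⟩⟩
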